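/- Let E(t) = c·1_{[τ,∞)}(t)·(t−τ) be a one-fold residue with c ≠ 0 and τ ∈ [t_{K}, t_{K+1}) for strictly increasing nodes t_k. Then for the nonuniform divided difference of order N ≥ 2, D^N E[k]/c = μ_K^N[k]·p + β_K^N[k]·(1−p), where p = (t_{K+1}−τ)/(t_{K+1}−t_K) ∈ [0,1], μ_K^2[k] = 1_{{K−1}}(k)/(t_{k+2}−t_k), β_K^2[k] = 1_{{K}}(k)/(t_{k+2}−t_k), and μ, β satisfy the same divided-difference recursion as D. -/

import Mathlib

/-- The nonuniform divided-difference operator on nodes `t`. -/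
noncomputable def nonUnifDiff (t : ℤ → ℝ) (f : ℤ → ℝ) : ℕ → ℤ → ℝ
  | 0 => f
  | N + 1 => fun k =>
      (nonUnifDiff t f N (k + 1) - nonUnifDiff t f N k) / (t (k + (N : ℤ) + 1) - t k)

/-- Iterates the divided-difference recursion starting from order `2`:
`liftTwo t f m` is the order-`(2+m)` sequence obtained from the order-`2` sequence `f`,
so that the step from order `N = m+2` to order `N+1` divides by `t (k+N+1) - t k`. -/
noncomputable def liftTwo (t : ℤ → ℝ) (f : ℤ → ℝ) : ℕ → ℤ → ℝ
  | 0 => f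
  | m + 1 => fun k =>
      (liftTwo t f m (k + 1) - liftTwo t f m k) / (t (k + (m : ℤ) + 3) - t k)

/-- `μ_K^N`, defined for `N ≥ 2` from `μ_K^2[k] = 1_{{K−1}}(k)/(t_{k+2}−t_k)`. -/
noncomputable def muSeq (t : ℤ → ℝ) (K : ℤ) (N : ℕ) : ℤ → ℝ :=
  liftTwo t (fun k => if k = K - 1 then 1 / (t (k + 2) - t k) else 0) (N - 2)

/-- `β_K^N`, defined for `N ≥ 2` from `β_K^2[k] = 1_{{K}}(k)/(t_{k+2}−t_k)`. -/
noncomputable def betaSeq (t : ℤ → ℝ) (K : ℤ) (N : ℕ) : ℤ → ℝ :=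
  liftTwo t (fun k => if k = K then 1 / (t (k + 2) - t k) else 0) (N - 2)

/-!
The ramp `j ↦ max (t j - τ) 0` has first divided differences `0` left of the cell
`[t K, t (K+1))` containing `τ`, `1` right of it and `p = (t (K+1) - τ)/(t (K+1) - t K)` on it.
Its second divided difference is therefore `p` times the spike `μ_K^2` plus `1 - p` times the
spike `β_K^2`, and the higher orders follow because the divided-difference recursion is linear.
-/

lemma nonUnifDiff_succ (t f : ℤ → ℝ) (N : ℕ) (k : ℤ) :
    nonUnifDiff t f (N + 1) k =
      (nonUnifDiff t f N (k + 1) - nonUnifDiff t f N k) / (t (k + N + 1) - t k) := rfl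

lemma liftTwo_succ (t f : ℤ → ℝ) (m : ℕ) (k : ℤ) :
    liftTwo t f (m + 1) k = (liftTwo t f m (k + 1) - liftTwo t f m k) / (t (k + m + 3) - t k) :=
  rfl

lemma nonUnifDiff_add_two (t f : ℤ → ℝ) (m : ℕ) (k : ℤ) :
    nonUnifDiff t f (m + 2) k = liftTwo t (nonUnifDiff t f 2) m k := by
  induction m generalizing k with
  | zero => rfl
  | succ m ih =>
    rw [show m + 1 + 2 = (m + 2) + 1 from rfl, nonUnifDiff_succ, liftTwo_succ, ih, ih]
    congr 3
    push_cast
    ring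

lemma nonUnifDiff_const_mul (t f : ℤ → ℝ) (c : ℝ) (N : ℕ) (k : ℤ) :
    nonUnifDiff t (fun j => c * f j) N k = c * nonUnifDiff t f N k := by
  induction N generalizing k with
  | zero => rfl
  | succ N ih =>
    simp only [nonUnifDiff_succ, ih]
    ring

lemma liftTwo_linear_combination (t a b : ℤ → ℝ) (p q : ℝ) (m : ℕ) (k : ℤ) :
    liftTwo t (fun j => a j * p + b j * q) m k = liftTwo t a m k * p + liftTwo t b m k * q := by
  induction m generalizing k with
  | zero => rfl
  | succ m ih =>
    simp only [liftTwo_succ, ih]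
    ring

lemma indicator_Ici_sub_eq_max (τ x : ℝ) :
    Set.indicator (Set.Ici τ) (fun y => y - τ) x = max (x - τ) 0 := by
  simp only [Set.indicator_apply, Set.mem_Ici]
  split_ifs with h
  · exact (max_eq_left (sub_nonneg.mpr h)).symm
  · exact (max_eq_right (sub_nonpos.mpr (not_le.mp h).le)).symm

section Ramp

variable {t : ℤ → ℝ} {τ : ℝ} {K : ℤ}

lemma nonUnifDiff_one_ramp (ht : StrictMono t) (hτ : t K ≤ τ ∧ τ < t (K + 1)) (k : ℤ) :
    nonUnifDiff t (fun j => max (t j - τ) 0) 1 k =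
      if k < K then 0 else if k = K then (t (K + 1) - τ) / (t (K + 1) - t K) else 1 := by
  have ramp_left : ∀ j ≤ K, max (t j - τ) 0 = 0 := fun j hj =>
    max_eq_right (sub_nonpos.mpr ((ht.monotone hj).trans hτ.1))
  have ramp_right : ∀ j, K + 1 ≤ j → max (t j - τ) 0 = t j - τ := fun j hj =>
    max_eq_left (sub_nonneg.mpr (hτ.2.le.trans (ht.monotone hj)))
  simp only [nonUnifDiff, Nat.cast_zero, add_zero]
  split_ifs with hlt heq
  · rw [ramp_left k hlt.le, ramp_left (k + 1) (by omega), sub_self, zero_div]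
  · subst heq
    rw [ramp_left k le_rfl, ramp_right (k + 1) le_rfl, sub_zero]
  · rw [ramp_right k (by omega), ramp_right (k + 1) (by omega), sub_sub_sub_cancel_right,
      div_self (sub_ne_zero.mpr (ht (lt_add_one k)).ne')]

lemma nonUnifDiff_two_ramp (ht : StrictMono t) (hτ : t K ≤ τ ∧ τ < t (K + 1)) (k : ℤ) :
    nonUnifDiff t (fun j => max (t j - τ) 0) 2 k =
      (if k = K - 1 then 1 / (t (k + 2) - t k) else 0) *
          ((t (K + 1) - τ) / (t (K + 1) - t K)) +
        (if k = K then 1 / (t (k + 2) - t k) else 0) *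
          (1 - (t (K + 1) - τ) / (t (K + 1) - t K)) := by
  rw [show (2 : ℕ) = 1 + 1 from rfl, nonUnifDiff_succ, nonUnifDiff_one_ramp ht hτ,
    nonUnifDiff_one_ramp ht hτ, show k + ((1 : ℕ) : ℤ) + 1 = k + 2 by push_cast; ring]
  obtain hk | hk | hk | hk : k < K - 1 ∨ k = K - 1 ∨ k = K ∨ K < k := by omega
  · simp only [show k < K by omega, show k + 1 < K by omega, show k ≠ K - 1 by omega,
      show k ≠ K by omega, if_true, if_false, sub_self, zero_div, zero_mul, add_zero]
  · subst k
    simp only [show K - 1 < K by omega, show K - 1 + 1 = K by ring, lt_irrefl, if_true, if_false,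
      show K - 1 ≠ K by omega]
    ring
  · subst k
    simp only [show ¬ K + 1 < K by omega, show K + 1 ≠ K by omega, show K ≠ K - 1 by omega,
      lt_irrefl, if_true, if_false]
    ring
  · simp only [show ¬ k < K by omega, show ¬ k + 1 < K by omega, show k + 1 ≠ K by omega,
      show k ≠ K by omega, show k ≠ K - 1 by omega, if_false, sub_self, zero_div, zero_mul,
      add_zero]

end Ramp

/-- decomposition of the nonuniform divided difference of a
one-fold residue `E(t) = c·1_{[τ,∞)}(t)·(t−τ)` as a convex combination in
`p = (t_{K+1}−τ)/(t_{K+1}−t_K)` of the `μ` and `β` sequences. -/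
theorem nonUnifDiff_one_fold_residue
    (t : ℤ → ℝ) (ht : StrictMono t)
    (c τ : ℝ) (hc : c ≠ 0) (K : ℤ)
    (hτ : t K ≤ τ ∧ τ < t (K + 1))
    (E : ℝ → ℝ)
    (hE : ∀ x : ℝ, E x = c * Set.indicator (Set.Ici τ) (fun y => y - τ) x)
    (N : ℕ) (hN : 2 ≤ N) (k : ℤ) :
    nonUnifDiff t (fun j => E (t j)) N k / c =
      muSeq t K N k * ((t (K + 1) - τ) / (t (K + 1) - t K)) +
      betaSeq t K N k * (1 - (t (K + 1) - τ) / (t (K + 1) - t K)) := by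
  obtain ⟨m, rfl⟩ : ∃ m, N = m + 2 := ⟨N - 2, by omega⟩
  have hE_ramp : (fun j => E (t j)) = fun j => c * max (t j - τ) 0 := by
    funext j
    rw [hE, indicator_Ici_sub_eq_max]
  rw [hE_ramp, nonUnifDiff_const_mul, mul_div_cancel_left₀ _ hc, nonUnifDiff_add_two,
    funext (nonUnifDiff_two_ramp ht hτ), liftTwo_linear_combination]
  simp only [muSeq, betaSeq, Nat.add_sub_cancel]
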